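/- Constructive Comparison: for guaranteed scoring games G, H, G ≽ H if and only if (1) L̲s(G) ≥ L̲s(H) and R̄s(G) ≥ R̄s(H); (2) for every Left option H^L, either some G^L ≽ H^L or some Right option H^{LR} of H^L satisfies G ≽ H^{LR}; and (3) for every Right option G^R, either some H^R ≼ G^R or some Left option G^{RL} of G^R satisfies G^{RL} ≽ H. -/

import Mathlib

/-- A scoring game: `la`/`ra` are the atom values (relevant when the
corresponding option list is empty), `L`/`R` the Left and Right options. -/
inductive SG : Type
  | mk (la ra : ℝ) (L R : List SG) : SG

namespace SG

theorem sizeOf_lt_of_mem {g : SG} {l : List SG} (h : g ∈ l) : sizeOf g < sizeOf l :=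
  List.sizeOf_lt_of_mem h

noncomputable instance : DecidableEq SG := Classical.decEq _

def la : SG → ℝ | mk a _ _ _ => a
def ra : SG → ℝ | mk _ b _ _ => b
def L : SG → List SG | mk _ _ l _ => l
def R : SG → List SG | mk _ _ _ r => r

/-- The list of atom values occurring in atomic followers of a game. -/
def atomList : SG → List ℝ
  | mk a b ls rs =>
    (if ls.isEmpty then [a] else (ls.attach.map (fun x => atomList x.1)).flatten)
    ++ (if rs.isEmpty then [b] else (rs.attach.map (fun x => atomList x.1)).flatten)
decreasing_by all_goals (simp only [SG.mk.sizeOf_spec]; (first | (have := sizeOf_lt_of_mem x.2) | (have := sizeOf_lt_of_mem (by assumption : x ∈ _))); omega)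

/-- The guaranteed condition. -/
def Guaranteed : SG → Prop
  | mk a b ls rs =>
    (∀ x ∈ ls, Guaranteed x) ∧ (∀ x ∈ rs, Guaranteed x) ∧
    (ls = [] → ∀ s ∈ (mk a b ls rs).atomList, a ≤ s) ∧
    (rs = [] → ∀ s ∈ (mk a b ls rs).atomList, s ≤ b)
decreasing_by all_goals (simp only [SG.mk.sizeOf_spec]; (first | (have := sizeOf_lt_of_mem x.2) | (have := sizeOf_lt_of_mem (by assumption : x ∈ _))); omega)

/-- Disjunctive sum. -/
noncomputable def add : SG → SG → SG
  | mk a1 b1 L1 R1, mk a2 b2 L2 R2 =>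
    mk (a1 + a2) (b1 + b2)
      (L1.attach.map (fun x => add x.1 (mk a2 b2 L2 R2))
        ++ L2.attach.map (fun x => add (mk a1 b1 L1 R1) x.1))
      (R1.attach.map (fun x => add x.1 (mk a2 b2 L2 R2))
        ++ R2.attach.map (fun x => add (mk a1 b1 L1 R1) x.1))
termination_by g h => sizeOf g + sizeOf h
decreasing_by all_goals (simp only [SG.mk.sizeOf_spec]; (first | (have := sizeOf_lt_of_mem x.2) | (have := sizeOf_lt_of_mem (by assumption : x ∈ _))); omega)

/-- Left- and Right-stops (as a pair). -/
noncomputable def stops : SG → ℝ × ℝ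
  | mk a b ls rs =>
    (if ls.isEmpty then a else (WithBot.unbotD 0 (ls.attach.map (fun x => (stops x.1).2)).maximum),
     if rs.isEmpty then b else (WithTop.untopD 0 (rs.attach.map (fun x => (stops x.1).1)).minimum))
decreasing_by all_goals (simp only [SG.mk.sizeOf_spec]; (first | (have := sizeOf_lt_of_mem x.2) | (have := sizeOf_lt_of_mem (by assumption : x ∈ _))); omega)

noncomputable def Ls (g : SG) : ℝ := g.stops.1
noncomputable def Rs (g : SG) : ℝ := g.stops.2

/-- The conjugate: interchange Left and Right and negate atoms. -/
noncomputable def conj : SG → SG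
  | mk a b ls rs =>
    mk (-b) (-a) (rs.attach.map (fun x => conj x.1)) (ls.attach.map (fun x => conj x.1))
decreasing_by all_goals (simp only [SG.mk.sizeOf_spec]; (first | (have := sizeOf_lt_of_mem x.2) | (have := sizeOf_lt_of_mem (by assumption : x ∈ _))); omega)

/-- The game ⟨∅^s | ∅^s⟩ of a real number `s`. -/
def num (s : ℝ) : SG := mk s s [] []

/-- The zero game ⟨∅^0 | ∅^0⟩. -/
def zero : SG := num 0

/-- Waiting moves: the image of the Normal-play integer `n`. -/
def wait : ℕ → SG
  | 0 => zero
  | n + 1 => mk 0 0 [wait n] []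

/-- Birthday: the depth of the game tree. -/
def birthday : SG → ℕ
  | mk _ _ ls rs =>
    max (WithBot.unbotD 0 (ls.attach.map (fun x => birthday x.1 + 1)).maximum)
        (WithBot.unbotD 0 (rs.attach.map (fun x => birthday x.1 + 1)).maximum)
decreasing_by all_goals (simp only [SG.mk.sizeOf_spec]; (first | (have := sizeOf_lt_of_mem x.2) | (have := sizeOf_lt_of_mem (by assumption : x ∈ _))); omega)

/-- `Ge G H` is the order `G ≽ H`. -/
def Ge (G H : SG) : Prop :=
  ∀ X : SG, X.Guaranteed → Ls (G.add X) ≥ Ls (H.add X) ∧ Rs (G.add X) ≥ Rs (H.add X)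

/-- Equivalence `G ∼ H`. -/
def Equiv (G H : SG) : Prop := Ge G H ∧ Ge H G

/-- Right's pass-allowed Left-stop `L̲s(G) = min_n Ls(G - n̂)`. -/
noncomputable def lsU (G : SG) : ℝ := ⨅ n : ℕ, Ls (G.add (wait n).conj)

/-- Left's pass-allowed Right-stop `R̄s(G) = max_n Rs(G + n̂)`. -/
noncomputable def rsO (G : SG) : ℝ := ⨆ n : ℕ, Rs (G.add (wait n))

/-- `L̄s(G) = max_n Ls(G + n̂)`. -/
noncomputable def lsO (G : SG) : ℝ := ⨆ n : ℕ, Ls (G.add (wait n))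

/-- `R̲s(G) = min_n Rs(G + n̂)`. -/
noncomputable def rsU (G : SG) : ℝ := ⨅ n : ℕ, Rs (G.add (wait n))

/-- Identity of games: same tree structure (up to reordering of options),
with identical atoms at atomic positions. -/
def Ident : SG → SG → Prop
  | mk a1 b1 L1 R1, mk a2 b2 L2 R2 =>
    (L1 = [] ↔ L2 = []) ∧ (L1 = [] → a1 = a2) ∧
    (R1 = [] ↔ R2 = []) ∧ (R1 = [] → b1 = b2) ∧
    (∀ x ∈ L1, ∃ y : {z // z ∈ L2}, Ident x y.1) ∧
    (∀ y ∈ L2, ∃ x : {z // z ∈ L1}, Ident x.1 y) ∧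
    (∀ x ∈ R1, ∃ y : {z // z ∈ R2}, Ident x y.1) ∧
    (∀ y ∈ R2, ∃ x : {z // z ∈ R1}, Ident x.1 y)
termination_by g h => sizeOf g
decreasing_by all_goals (simp only [SG.mk.sizeOf_spec]; (first | (have := sizeOf_lt_of_mem x.2) | (have := sizeOf_lt_of_mem (by assumption : x ∈ _))); omega)

/-- `Linked H G`: `H` is linked to `G` (by some guaranteed `T`). -/
def Linked (H G : SG) : Prop :=
  ∃ T : SG, T.Guaranteed ∧ Ls (H.add T) < 0 ∧ 0 < Rs (G.add T)

/-- Replace every atom of `G` by `∅^x`. -/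
def subst (v : ℝ) : SG → SG
  | mk _ _ ls rs =>
    mk v v (ls.attach.map (fun x => subst v x.1)) (rs.attach.map (fun x => subst v x.1))
decreasing_by all_goals (simp only [SG.mk.sizeOf_spec]; (first | (have := sizeOf_lt_of_mem x.2) | (have := sizeOf_lt_of_mem (by assumption : x ∈ _))); omega)

/-- The maximum atom value in `G`. -/
noncomputable def maxAtom (G : SG) : ℝ := WithBot.unbotD 0 G.atomList.maximum

/-- The minimum atom value in `G`. -/
noncomputable def minAtom (G : SG) : ℝ := WithTop.untopD 0 G.atomList.minimum

/-!
The stop inequalities are necessary because `G` and `H` can be played against the waiting games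
`±n̂`. For the other two conditions, a failure of `A ≽ B` is witnessed by a guaranteed `X` on which
a Left- or a Right-stop drops; adding a number to `X` puts `0` strictly between the two stops, and
the games `{X | -M}` and `{M | X}` turn a witness for Right-stops into one for Left-stops and back.
If condition (2) fails at `H^L`, such witnesses for all `G^L ⋡ H^L` and all `G ⋡ H^{LR}` become the
options of one guaranteed `T` with `Ls(G + T) < 0 < Rs(H^L + T) ≤ Ls(H + T)`, so `G ⋡ H`.

Sufficiency is an induction on the test game `X`. The only case not covered by the induction is
when a player, say Left, has no move in `H + X`: then `Ls(H + X) = L̲s(H) + a` with `a` Left's atom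
of `X`, while `Ls(G + X) ≥ Ls(G - N̂) + a ≥ L̲s(G) + a` for `N` the birthday of `X`, because Right's
moves in `X` can be imitated by waiting moves in `-N̂` and both games are guaranteed.
-/

theorem _root_.List.unbotD_maximum_mem {α : Type*} [LinearOrder α] {l : List α} (d : α)
    (h : l ≠ []) : l.maximum.unbotD d ∈ l := by
  obtain ⟨m, hm⟩ := WithBot.ne_bot_iff_exists.1 (List.maximum_ne_bot_of_ne_nil h)
  rw [← hm, WithBot.unbotD_coe]
  exact List.maximum_mem hm.symm

theorem _root_.List.le_unbotD_maximum_of_mem {α : Type*} [LinearOrder α] {l : List α} {a : α}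
    (d : α) (ha : a ∈ l) : a ≤ l.maximum.unbotD d := by
  obtain ⟨m, hm⟩ :=
    WithBot.ne_bot_iff_exists.1 (List.maximum_ne_bot_of_ne_nil (List.ne_nil_of_mem ha))
  rw [← hm, WithBot.unbotD_coe]
  exact List.le_maximum_of_mem ha hm.symm

theorem _root_.List.untopD_minimum_mem {α : Type*} [LinearOrder α] {l : List α} (d : α)
    (h : l ≠ []) : l.minimum.untopD d ∈ l := by
  obtain ⟨m, hm⟩ := WithTop.ne_top_iff_exists.1 (List.minimum_ne_top_of_ne_nil h)
  rw [← hm, WithTop.untopD_coe]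
  exact List.minimum_mem hm.symm

theorem _root_.List.untopD_minimum_le_of_mem {α : Type*} [LinearOrder α] {l : List α} {a : α}
    (d : α) (ha : a ∈ l) : l.minimum.untopD d ≤ a := by
  obtain ⟨m, hm⟩ :=
    WithTop.ne_top_iff_exists.1 (List.minimum_ne_top_of_ne_nil (List.ne_nil_of_mem ha))
  rw [← hm, WithTop.untopD_coe]
  exact List.minimum_le_of_mem ha hm.symm

theorem _root_.List.exists_forall_lt {α : Type*} (l : List α) (f : α → ℝ) :
    ∃ M, ∀ x ∈ l, f x < M := by
  obtain ⟨M, hM⟩ := (l.finite_toSet.image f).bddAbove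
  exact ⟨M + 1, fun x hx => (hM ⟨x, hx, rfl⟩).trans_lt (lt_add_one M)⟩

@[simp] theorem L_mk (a b : ℝ) (l r : List SG) : (mk a b l r).L = l := rfl
@[simp] theorem R_mk (a b : ℝ) (l r : List SG) : (mk a b l r).R = r := rfl

theorem sizeOf_lt_of_mem_L {G g : SG} (h : g ∈ G.L) : sizeOf g < sizeOf G := by
  cases G
  have := sizeOf_lt_of_mem h
  simp only [L_mk, mk.sizeOf_spec] at *
  omega

theorem sizeOf_lt_of_mem_R {G g : SG} (h : g ∈ G.R) : sizeOf g < sizeOf G := by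
  cases G
  have := sizeOf_lt_of_mem h
  simp only [R_mk, mk.sizeOf_spec] at *
  omega

theorem add_def (G X : SG) : G.add X = mk (G.la + X.la) (G.ra + X.ra)
    (G.L.map (·.add X) ++ X.L.map G.add) (G.R.map (·.add X) ++ X.R.map G.add) := by
  cases G; cases X; rw [add]; simp [la, ra, L, R]

@[simp] theorem la_add (G X : SG) : (G.add X).la = G.la + X.la := by rw [add_def]; rfl
@[simp] theorem ra_add (G X : SG) : (G.add X).ra = G.ra + X.ra := by rw [add_def]; rfl

theorem L_add (G X : SG) : (G.add X).L = G.L.map (·.add X) ++ X.L.map G.add := by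
  rw [add_def]; rfl

theorem R_add (G X : SG) : (G.add X).R = G.R.map (·.add X) ++ X.R.map G.add := by
  rw [add_def]; rfl

theorem mem_L_add {G X g : SG} :
    g ∈ (G.add X).L ↔ (∃ y ∈ G.L, g = y.add X) ∨ ∃ y ∈ X.L, g = G.add y := by
  simp [L_add, eq_comm]

theorem mem_R_add {G X g : SG} :
    g ∈ (G.add X).R ↔ (∃ y ∈ G.R, g = y.add X) ∨ ∃ y ∈ X.R, g = G.add y := by
  simp [R_add, eq_comm]

theorem L_add_eq_nil {G X : SG} : (G.add X).L = [] ↔ G.L = [] ∧ X.L = [] := by simp [L_add]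
theorem R_add_eq_nil {G X : SG} : (G.add X).R = [] ↔ G.R = [] ∧ X.R = [] := by simp [R_add]

theorem add_assoc (G X Y : SG) : (G.add X).add Y = G.add (X.add Y) := by
  rw [add_def (G.add X) Y, add_def G (X.add Y)]
  simp only [la_add, ra_add, L_add, R_add, List.map_append, List.map_map, List.append_assoc,
    _root_.add_assoc]
  congr 1 <;>
    refine congrArg₂ (· ++ ·) (List.map_congr_left fun g hg => add_assoc g X Y) <|
      congrArg₂ (· ++ ·) (List.map_congr_left fun x hx => add_assoc G x Y)
        (List.map_congr_left fun y hy => add_assoc G X y)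
termination_by sizeOf G + sizeOf X + sizeOf Y
decreasing_by
  all_goals first
    | have := sizeOf_lt_of_mem_L hg | have := sizeOf_lt_of_mem_R hg
    | have := sizeOf_lt_of_mem_L hx | have := sizeOf_lt_of_mem_R hx
    | have := sizeOf_lt_of_mem_L hy | have := sizeOf_lt_of_mem_R hy
  all_goals omega

theorem Ls_def (G : SG) : Ls G = if G.L = [] then G.la else (G.L.map Rs).maximum.unbotD 0 := by
  cases G; rw [Ls, stops]
  simp only [List.isEmpty_iff, List.map_subtype, List.unattach_attach, L, la]; rfl

theorem Rs_def (G : SG) : Rs G = if G.R = [] then G.ra else (G.R.map Ls).minimum.untopD 0 := by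
  cases G; rw [Rs, stops]
  simp only [List.isEmpty_iff, List.map_subtype, List.unattach_attach, R, ra]; rfl

theorem Ls_of_L_eq_nil {G : SG} (h : G.L = []) : Ls G = G.la := by rw [Ls_def, if_pos h]
theorem Rs_of_R_eq_nil {G : SG} (h : G.R = []) : Rs G = G.ra := by rw [Rs_def, if_pos h]

theorem Rs_le_Ls_of_mem_L {G g : SG} (h : g ∈ G.L) : Rs g ≤ Ls G := by
  rw [Ls_def, if_neg (List.ne_nil_of_mem h)]
  exact List.le_unbotD_maximum_of_mem 0 (List.mem_map_of_mem h)

theorem Rs_le_Ls_of_mem_R {G g : SG} (h : g ∈ G.R) : Rs G ≤ Ls g := by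
  rw [Rs_def, if_neg (List.ne_nil_of_mem h)]
  exact List.untopD_minimum_le_of_mem 0 (List.mem_map_of_mem h)

theorem exists_Ls_eq_Rs {G : SG} (h : G.L ≠ []) : ∃ g ∈ G.L, Ls G = Rs g := by
  rw [Ls_def, if_neg h]
  obtain ⟨g, hg, he⟩ := List.mem_map.1 (List.unbotD_maximum_mem 0 (l := G.L.map Rs) (by simpa))
  exact ⟨g, hg, he.symm⟩

theorem exists_Rs_eq_Ls {G : SG} (h : G.R ≠ []) : ∃ g ∈ G.R, Rs G = Ls g := by
  rw [Rs_def, if_neg h]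
  obtain ⟨g, hg, he⟩ := List.mem_map.1 (List.untopD_minimum_mem 0 (l := G.R.map Ls) (by simpa))
  exact ⟨g, hg, he.symm⟩

theorem Ls_le {G : SG} {c : ℝ} (h : G.L ≠ []) (hc : ∀ g ∈ G.L, Rs g ≤ c) : Ls G ≤ c := by
  obtain ⟨g, hg, he⟩ := exists_Ls_eq_Rs h
  exact he ▸ hc g hg

theorem le_Rs {G : SG} {c : ℝ} (h : G.R ≠ []) (hc : ∀ g ∈ G.R, c ≤ Ls g) : c ≤ Rs G := by
  obtain ⟨g, hg, he⟩ := exists_Rs_eq_Ls h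
  exact he ▸ hc g hg

@[simp] theorem L_num (s : ℝ) : (num s).L = [] := rfl
@[simp] theorem R_num (s : ℝ) : (num s).R = [] := rfl
@[simp] theorem la_num (s : ℝ) : (num s).la = s := rfl
@[simp] theorem ra_num (s : ℝ) : (num s).ra = s := rfl

theorem stops_add_num (G : SG) (s : ℝ) :
    Ls (G.add (num s)) = Ls G + s ∧ Rs (G.add (num s)) = Rs G + s := by
  have hL : (G.add (num s)).L = G.L.map (·.add (num s)) := by simp [L_add]
  have hR : (G.add (num s)).R = G.R.map (·.add (num s)) := by simp [R_add]
  constructor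
  · by_cases h : G.L = []
    · rw [Ls_of_L_eq_nil (by simp [hL, h]), Ls_of_L_eq_nil h, la_add, la_num]
    refine le_antisymm (Ls_le (by simpa [hL]) ?_) ?_
    · simp only [hL, List.mem_map]
      rintro _ ⟨g, hg, rfl⟩
      rw [(stops_add_num g s).2]
      linarith [Rs_le_Ls_of_mem_L hg]
    · obtain ⟨g, hg, he⟩ := exists_Ls_eq_Rs h
      rw [he, ← (stops_add_num g s).2]
      exact Rs_le_Ls_of_mem_L (by simpa [hL] using ⟨g, hg, rfl⟩)
  · by_cases h : G.R = []
    · rw [Rs_of_R_eq_nil (by simp [hR, h]), Rs_of_R_eq_nil h, ra_add, ra_num]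
    refine le_antisymm ?_ (le_Rs (by simpa [hR]) ?_)
    · obtain ⟨g, hg, he⟩ := exists_Rs_eq_Ls h
      rw [he, ← (stops_add_num g s).1]
      exact Rs_le_Ls_of_mem_R (by simpa [hR] using ⟨g, hg, rfl⟩)
    · simp only [hR, List.mem_map]
      rintro _ ⟨g, hg, rfl⟩
      rw [(stops_add_num g s).1]
      linarith [Rs_le_Ls_of_mem_R hg]
termination_by sizeOf G
decreasing_by all_goals first | exact sizeOf_lt_of_mem_L hg | exact sizeOf_lt_of_mem_R hg

theorem Ls_add_add_num (G X : SG) (s : ℝ) : Ls (G.add (X.add (num s))) = Ls (G.add X) + s := by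
  rw [← add_assoc, (stops_add_num _ s).1]

theorem Rs_add_add_num (G X : SG) (s : ℝ) : Rs (G.add (X.add (num s))) = Rs (G.add X) + s := by
  rw [← add_assoc, (stops_add_num _ s).2]

theorem atomList_def (G : SG) : G.atomList =
    (if G.L = [] then [G.la] else (G.L.map atomList).flatten) ++
      (if G.R = [] then [G.ra] else (G.R.map atomList).flatten) := by
  cases G; rw [atomList]
  simp only [List.isEmpty_iff, List.map_subtype, List.unattach_attach, L, la, R, ra]; congr

theorem mem_atomList_of_mem_L {G g : SG} {s : ℝ} (hg : g ∈ G.L) (hs : s ∈ g.atomList) :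
    s ∈ G.atomList := by
  rw [atomList_def, if_neg (List.ne_nil_of_mem hg)]
  exact List.mem_append_left _ (List.mem_flatten.2 ⟨_, List.mem_map_of_mem hg, hs⟩)

theorem mem_atomList_of_mem_R {G g : SG} {s : ℝ} (hg : g ∈ G.R) (hs : s ∈ g.atomList) :
    s ∈ G.atomList := by
  rw [atomList_def, if_neg (List.ne_nil_of_mem hg)]
  exact List.mem_append_right _ (List.mem_flatten.2 ⟨_, List.mem_map_of_mem hg, hs⟩)

theorem la_mem_atomList {G : SG} (h : G.L = []) : G.la ∈ G.atomList := by
  rw [atomList_def, if_pos h]; simp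

theorem ra_mem_atomList {G : SG} (h : G.R = []) : G.ra ∈ G.atomList := by
  rw [atomList_def, if_pos h]; simp

theorem stops_mem_atomList (G : SG) : Ls G ∈ G.atomList ∧ Rs G ∈ G.atomList := by
  constructor
  · by_cases h : G.L = []
    · exact Ls_of_L_eq_nil h ▸ la_mem_atomList h
    obtain ⟨g, hg, he⟩ := exists_Ls_eq_Rs h
    exact he ▸ mem_atomList_of_mem_L hg (stops_mem_atomList g).2
  · by_cases h : G.R = []
    · exact Rs_of_R_eq_nil h ▸ ra_mem_atomList h
    obtain ⟨g, hg, he⟩ := exists_Rs_eq_Ls h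
    exact he ▸ mem_atomList_of_mem_R hg (stops_mem_atomList g).1
termination_by sizeOf G
decreasing_by exacts [sizeOf_lt_of_mem_L hg, sizeOf_lt_of_mem_R hg]

theorem mem_atomList_add {G X : SG} {s : ℝ} (hs : s ∈ (G.add X).atomList) :
    ∃ u ∈ G.atomList, ∃ v ∈ X.atomList, s = u + v := by
  rw [atomList_def] at hs
  rcases List.mem_append.1 hs with h | h
  · by_cases hL : (G.add X).L = []
    · obtain ⟨hG, hX⟩ := L_add_eq_nil.1 hL
      rw [if_pos hL, List.mem_singleton, la_add] at h
      exact ⟨_, la_mem_atomList hG, _, la_mem_atomList hX, h⟩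
    rw [if_neg hL] at h
    obtain ⟨_, hl, hsl⟩ := List.mem_flatten.1 h
    obtain ⟨y, hy, rfl⟩ := List.mem_map.1 hl
    obtain ⟨g, hg, rfl⟩ | ⟨x, hx, rfl⟩ := mem_L_add.1 hy
    · obtain ⟨u, hu, v, hv, rfl⟩ := mem_atomList_add hsl
      exact ⟨u, mem_atomList_of_mem_L hg hu, v, hv, rfl⟩
    · obtain ⟨u, hu, v, hv, rfl⟩ := mem_atomList_add hsl
      exact ⟨u, hu, v, mem_atomList_of_mem_L hx hv, rfl⟩
  · by_cases hR : (G.add X).R = []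
    · obtain ⟨hG, hX⟩ := R_add_eq_nil.1 hR
      rw [if_pos hR, List.mem_singleton, ra_add] at h
      exact ⟨_, ra_mem_atomList hG, _, ra_mem_atomList hX, h⟩
    rw [if_neg hR] at h
    obtain ⟨_, hl, hsl⟩ := List.mem_flatten.1 h
    obtain ⟨y, hy, rfl⟩ := List.mem_map.1 hl
    obtain ⟨g, hg, rfl⟩ | ⟨x, hx, rfl⟩ := mem_R_add.1 hy
    · obtain ⟨u, hu, v, hv, rfl⟩ := mem_atomList_add hsl
      exact ⟨u, mem_atomList_of_mem_R hg hu, v, hv, rfl⟩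
    · obtain ⟨u, hu, v, hv, rfl⟩ := mem_atomList_add hsl
      exact ⟨u, hu, v, mem_atomList_of_mem_R hx hv, rfl⟩
termination_by sizeOf G + sizeOf X
decreasing_by
  all_goals first
    | have := sizeOf_lt_of_mem_L hg | have := sizeOf_lt_of_mem_R hg
    | have := sizeOf_lt_of_mem_L hx | have := sizeOf_lt_of_mem_R hx
  all_goals omega

theorem stops_add_mem_atomList (G : SG) {X : SG} (hX : ∀ s ∈ X.atomList, s = 0) :
    Ls (G.add X) ∈ G.atomList ∧ Rs (G.add X) ∈ G.atomList := by
  constructor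
  · obtain ⟨u, hu, v, hv, he⟩ := mem_atomList_add (stops_mem_atomList (G.add X)).1
    rwa [he, hX v hv, add_zero]
  · obtain ⟨u, hu, v, hv, he⟩ := mem_atomList_add (stops_mem_atomList (G.add X)).2
    rwa [he, hX v hv, add_zero]

theorem guaranteed_iff {G : SG} : G.Guaranteed ↔
    (∀ x ∈ G.L, x.Guaranteed) ∧ (∀ x ∈ G.R, x.Guaranteed) ∧
      (G.L = [] → ∀ s ∈ G.atomList, G.la ≤ s) ∧ (G.R = [] → ∀ s ∈ G.atomList, s ≤ G.ra) := by
  cases G; rw [Guaranteed]; rfl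

namespace Guaranteed

theorem of_mem_L {G g : SG} (hG : G.Guaranteed) (hg : g ∈ G.L) : g.Guaranteed :=
  (guaranteed_iff.1 hG).1 g hg

theorem of_mem_R {G g : SG} (hG : G.Guaranteed) (hg : g ∈ G.R) : g.Guaranteed :=
  (guaranteed_iff.1 hG).2.1 g hg

theorem la_le {G : SG} (hG : G.Guaranteed) (h : G.L = []) {s : ℝ} (hs : s ∈ G.atomList) :
    G.la ≤ s :=
  (guaranteed_iff.1 hG).2.2.1 h s hs

theorem le_ra {G : SG} (hG : G.Guaranteed) (h : G.R = []) {s : ℝ} (hs : s ∈ G.atomList) :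
    s ≤ G.ra :=
  (guaranteed_iff.1 hG).2.2.2 h s hs

theorem add {G X : SG} (hG : G.Guaranteed) (hX : X.Guaranteed) : (G.add X).Guaranteed := by
  refine guaranteed_iff.2 ⟨fun y hy => ?_, fun y hy => ?_, fun h s hs => ?_, fun h s hs => ?_⟩
  · obtain ⟨g, hg, rfl⟩ | ⟨x, hx, rfl⟩ := mem_L_add.1 hy
    exacts [(hG.of_mem_L hg).add hX, hG.add (hX.of_mem_L hx)]
  · obtain ⟨g, hg, rfl⟩ | ⟨x, hx, rfl⟩ := mem_R_add.1 hy
    exacts [(hG.of_mem_R hg).add hX, hG.add (hX.of_mem_R hx)]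
  · obtain ⟨u, hu, v, hv, rfl⟩ := mem_atomList_add hs
    rw [la_add]
    exact add_le_add (hG.la_le (L_add_eq_nil.1 h).1 hu) (hX.la_le (L_add_eq_nil.1 h).2 hv)
  · obtain ⟨u, hu, v, hv, rfl⟩ := mem_atomList_add hs
    rw [ra_add]
    exact add_le_add (hG.le_ra (R_add_eq_nil.1 h).1 hu) (hX.le_ra (R_add_eq_nil.1 h).2 hv)
termination_by sizeOf G + sizeOf X
decreasing_by
  all_goals first
    | have := sizeOf_lt_of_mem_L hg | have := sizeOf_lt_of_mem_R hg
    | have := sizeOf_lt_of_mem_L hx | have := sizeOf_lt_of_mem_R hx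
  all_goals omega

end Guaranteed

theorem guaranteed_of_forall_mem_atomList_eq {G : SG} {c : ℝ} (h : ∀ s ∈ G.atomList, s = c) :
    G.Guaranteed := by
  refine guaranteed_iff.2 ⟨fun g hg => ?_, fun g hg => ?_, fun hL s hs => ?_, fun hR s hs => ?_⟩
  · exact guaranteed_of_forall_mem_atomList_eq fun s hs => h s (mem_atomList_of_mem_L hg hs)
  · exact guaranteed_of_forall_mem_atomList_eq fun s hs => h s (mem_atomList_of_mem_R hg hs)
  · rw [h s hs, h _ (la_mem_atomList hL)]
  · rw [h s hs, h _ (ra_mem_atomList hR)]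
termination_by sizeOf G
decreasing_by exacts [sizeOf_lt_of_mem_L hg, sizeOf_lt_of_mem_R hg]

theorem guaranteed_num (s : ℝ) : (num s).Guaranteed :=
  guaranteed_of_forall_mem_atomList_eq (c := s) fun t ht => by simpa [atomList_def] using ht

theorem guaranteed_mk_of_ne_nil {a b : ℝ} {l r : List SG} (hl : l ≠ []) (hr : r ≠ [])
    (hlG : ∀ x ∈ l, x.Guaranteed) (hrG : ∀ x ∈ r, x.Guaranteed) : (mk a b l r).Guaranteed :=
  guaranteed_iff.2 ⟨hlG, hrG, fun h => absurd h hl, fun h => absurd h hr⟩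

@[simp] theorem R_wait (n : ℕ) : (wait n).R = [] := by cases n <;> rfl
@[simp] theorem ra_wait (n : ℕ) : (wait n).ra = 0 := by cases n <;> rfl
theorem L_wait_succ (n : ℕ) : (wait (n + 1)).L = [wait n] := rfl

theorem conj_wait_succ (n : ℕ) : conj (wait (n + 1)) = mk 0 0 [] [conj (wait n)] := by
  rw [wait, conj]; simp

@[simp] theorem L_conj_wait (n : ℕ) : (conj (wait n)).L = [] := by
  cases n
  · simp [wait, zero, num, conj]
  · rw [conj_wait_succ]; rfl

@[simp] theorem la_conj_wait (n : ℕ) : (conj (wait n)).la = 0 := by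
  cases n
  · simp [wait, zero, num, conj, la]
  · rw [conj_wait_succ]; rfl

theorem R_conj_wait_succ (n : ℕ) : (conj (wait (n + 1))).R = [conj (wait n)] := by
  rw [conj_wait_succ]; rfl

theorem mem_atomList_wait {n : ℕ} {s : ℝ} (h : s ∈ (wait n).atomList) : s = 0 := by
  induction n with
  | zero => simpa [wait, zero, num, atomList_def, L, R, la, ra] using h
  | succ n ih =>
    rw [atomList_def] at h
    simp only [L_wait_succ, R_wait, ra_wait, List.cons_ne_self, ↓reduceIte,
      List.map_cons, List.map_nil, List.flatten_cons, List.flatten_nil, List.append_nil,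
      List.mem_append, List.mem_cons, List.not_mem_nil, or_false] at h
    exact h.elim ih id

theorem mem_atomList_conj_wait {n : ℕ} {s : ℝ} (h : s ∈ (conj (wait n)).atomList) : s = 0 := by
  induction n with
  | zero => simpa [wait, zero, num, conj, atomList_def, L, R, la, ra] using h
  | succ n ih =>
    rw [atomList_def] at h
    simp only [R_conj_wait_succ, L_conj_wait, la_conj_wait, ↓reduceIte,
      List.cons_ne_self, List.map_cons, List.map_nil, List.flatten_cons, List.flatten_nil,
      List.append_nil, List.cons_append, List.nil_append, List.mem_cons] at h
    exact h.elim id ih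

theorem guaranteed_wait (n : ℕ) : (wait n).Guaranteed :=
  guaranteed_of_forall_mem_atomList_eq fun _ => mem_atomList_wait

theorem guaranteed_conj_wait (n : ℕ) : (conj (wait n)).Guaranteed :=
  guaranteed_of_forall_mem_atomList_eq fun _ => mem_atomList_conj_wait

theorem bddBelow_Ls_add_conj_wait (G : SG) :
    BddBelow (Set.range fun n => Ls (G.add (conj (wait n)))) :=
  G.atomList.finite_toSet.bddBelow.mono <| Set.range_subset_iff.2 fun _ =>
    (stops_add_mem_atomList G fun _ => mem_atomList_conj_wait).1

theorem bddAbove_Rs_add_wait (G : SG) : BddAbove (Set.range fun n => Rs (G.add (wait n))) :=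
  G.atomList.finite_toSet.bddAbove.mono <| Set.range_subset_iff.2 fun _ =>
    (stops_add_mem_atomList G fun _ => mem_atomList_wait).2

theorem lsU_le (G : SG) (n : ℕ) : lsU G ≤ Ls (G.add (conj (wait n))) :=
  ciInf_le (bddBelow_Ls_add_conj_wait G) n

theorem le_rsO (G : SG) (n : ℕ) : Rs (G.add (wait n)) ≤ rsO G :=
  le_ciSup (bddAbove_Rs_add_wait G) n

theorem lsU_of_L_eq_nil {G : SG} (h : G.L = []) : lsU G = G.la := by
  simp_rw [lsU, Ls_of_L_eq_nil (L_add_eq_nil.2 ⟨h, L_conj_wait _⟩), la_add, la_conj_wait,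
    add_zero, ciInf_const]

theorem rsO_of_R_eq_nil {G : SG} (h : G.R = []) : rsO G = G.ra := by
  simp_rw [rsO, Rs_of_R_eq_nil (R_add_eq_nil.2 ⟨h, R_wait _⟩), ra_add, ra_wait, add_zero,
    ciSup_const]

theorem birthday_def (G : SG) : G.birthday =
    max ((G.L.map (birthday · + 1)).maximum.unbotD 0)
      ((G.R.map (birthday · + 1)).maximum.unbotD 0) := by
  cases G; rw [birthday]; simp [L, R]

theorem birthday_lt_of_mem_L {G g : SG} (h : g ∈ G.L) : g.birthday < G.birthday := by
  have := List.le_unbotD_maximum_of_mem 0 (List.mem_map_of_mem (f := (birthday · + 1)) h)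
  rw [birthday_def G]; omega

theorem birthday_lt_of_mem_R {G g : SG} (h : g ∈ G.R) : g.birthday < G.birthday := by
  have := List.le_unbotD_maximum_of_mem 0 (List.mem_map_of_mem (f := (birthday · + 1)) h)
  rw [birthday_def G]; omega

mutual

theorem Ls_add_conj_wait_add_le {G X : SG} (hG : G.Guaranteed) {m : ℝ}
    (hm : ∀ s ∈ X.atomList, m ≤ s) {N : ℕ} (hN : X.birthday ≤ N) :
    Ls (G.add (conj (wait N))) + m ≤ Ls (G.add X) := by
  by_cases hGL : G.L = []
  · rw [Ls_of_L_eq_nil (L_add_eq_nil.2 ⟨hGL, L_conj_wait N⟩), la_add, la_conj_wait, add_zero]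
    by_cases hXL : X.L = []
    · rw [Ls_of_L_eq_nil (L_add_eq_nil.2 ⟨hGL, hXL⟩), la_add]
      linarith [hm _ (la_mem_atomList hXL)]
    obtain ⟨x, hx⟩ := List.exists_mem_of_ne_nil _ hXL
    have hxN := birthday_lt_of_mem_L hx
    obtain ⟨N, rfl⟩ : ∃ N', N = N' + 1 := Nat.exists_eq_succ_of_ne_zero (by omega)
    have hwait := hG.la_le hGL (stops_add_mem_atomList G fun _ => mem_atomList_conj_wait (n := N)).2
    have hx' := Rs_add_conj_wait_add_le hG (fun s hs => hm s (mem_atomList_of_mem_L hx hs))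
      (Nat.le_of_lt_succ (hxN.trans_le hN))
    linarith [Rs_le_Ls_of_mem_L (mem_L_add.2 (.inr ⟨x, hx, rfl⟩) : G.add x ∈ (G.add X).L)]
  · obtain ⟨y, hy, he⟩ :=
      exists_Ls_eq_Rs (G := G.add (conj (wait N))) fun h => hGL (L_add_eq_nil.1 h).1
    obtain ⟨g, hg, rfl⟩ | ⟨_, h, _⟩ := mem_L_add.1 hy
    · rw [he]
      linarith [Rs_add_conj_wait_add_le (hG.of_mem_L hg) hm hN,
        Rs_le_Ls_of_mem_L (mem_L_add.2 (.inl ⟨g, hg, rfl⟩) : g.add X ∈ (G.add X).L)]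
    · simp at h
termination_by sizeOf G + sizeOf X
decreasing_by
  all_goals first | have := sizeOf_lt_of_mem_L hx | have := sizeOf_lt_of_mem_L hg
  all_goals omega

theorem Rs_add_conj_wait_add_le {G X : SG} (hG : G.Guaranteed) {m : ℝ}
    (hm : ∀ s ∈ X.atomList, m ≤ s) {N : ℕ} (hN : X.birthday ≤ N) :
    Rs (G.add (conj (wait N))) + m ≤ Rs (G.add X) := by
  by_cases hR : G.R = [] ∧ X.R = []
  · rw [Rs_of_R_eq_nil (R_add_eq_nil.2 hR), ra_add]
    linarith [hm _ (ra_mem_atomList hR.2),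
      hG.le_ra hR.1 (stops_add_mem_atomList G fun _ => mem_atomList_conj_wait (n := N)).2]
  refine le_Rs (fun h => hR (R_add_eq_nil.1 h)) fun y hy => ?_
  obtain ⟨g, hg, rfl⟩ | ⟨x, hx, rfl⟩ := mem_R_add.1 hy
  · linarith [Ls_add_conj_wait_add_le (hG.of_mem_R hg) hm hN,
      Rs_le_Ls_of_mem_R (mem_R_add.2 (.inl ⟨g, hg, rfl⟩) : g.add _ ∈ (G.add (conj (wait N))).R)]
  · have hxN := birthday_lt_of_mem_R hx
    obtain ⟨N, rfl⟩ : ∃ N', N = N' + 1 := Nat.exists_eq_succ_of_ne_zero (by omega)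
    have hwait : G.add (conj (wait N)) ∈ (G.add (conj (wait (N + 1)))).R :=
      mem_R_add.2 (.inr ⟨_, by simp [R_conj_wait_succ], rfl⟩)
    linarith [Rs_le_Ls_of_mem_R hwait, Ls_add_conj_wait_add_le hG
      (fun s hs => hm s (mem_atomList_of_mem_R hx hs)) (Nat.le_of_lt_succ (hxN.trans_le hN))]
termination_by sizeOf G + sizeOf X
decreasing_by
  all_goals first | have := sizeOf_lt_of_mem_R hx | have := sizeOf_lt_of_mem_R hg
  all_goals omega

end

mutual

theorem Rs_add_le_Rs_add_wait_add {G X : SG} (hG : G.Guaranteed) {m : ℝ}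
    (hm : ∀ s ∈ X.atomList, s ≤ m) {N : ℕ} (hN : X.birthday ≤ N) :
    Rs (G.add X) ≤ Rs (G.add (wait N)) + m := by
  by_cases hGR : G.R = []
  · rw [Rs_of_R_eq_nil (R_add_eq_nil.2 ⟨hGR, R_wait N⟩), ra_add, ra_wait, add_zero]
    by_cases hXR : X.R = []
    · rw [Rs_of_R_eq_nil (R_add_eq_nil.2 ⟨hGR, hXR⟩), ra_add]
      linarith [hm _ (ra_mem_atomList hXR)]
    obtain ⟨x, hx⟩ := List.exists_mem_of_ne_nil _ hXR
    have hxN := birthday_lt_of_mem_R hx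
    obtain ⟨N, rfl⟩ : ∃ N', N = N' + 1 := Nat.exists_eq_succ_of_ne_zero (by omega)
    have hwait := hG.le_ra hGR (stops_add_mem_atomList G fun _ => mem_atomList_wait (n := N)).1
    have hx' := Ls_add_le_Ls_add_wait_add hG (fun s hs => hm s (mem_atomList_of_mem_R hx hs))
      (Nat.le_of_lt_succ (hxN.trans_le hN))
    linarith [Rs_le_Ls_of_mem_R (mem_R_add.2 (.inr ⟨x, hx, rfl⟩) : G.add x ∈ (G.add X).R)]
  · obtain ⟨y, hy, he⟩ :=
      exists_Rs_eq_Ls (G := G.add (wait N)) fun h => hGR (R_add_eq_nil.1 h).1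
    obtain ⟨g, hg, rfl⟩ | ⟨_, h, _⟩ := mem_R_add.1 hy
    · rw [he]
      linarith [Ls_add_le_Ls_add_wait_add (hG.of_mem_R hg) hm hN,
        Rs_le_Ls_of_mem_R (mem_R_add.2 (.inl ⟨g, hg, rfl⟩) : g.add X ∈ (G.add X).R)]
    · simp at h
termination_by sizeOf G + sizeOf X
decreasing_by
  all_goals first | have := sizeOf_lt_of_mem_R hx | have := sizeOf_lt_of_mem_R hg
  all_goals omega

theorem Ls_add_le_Ls_add_wait_add {G X : SG} (hG : G.Guaranteed) {m : ℝ}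
    (hm : ∀ s ∈ X.atomList, s ≤ m) {N : ℕ} (hN : X.birthday ≤ N) :
    Ls (G.add X) ≤ Ls (G.add (wait N)) + m := by
  by_cases hL : G.L = [] ∧ X.L = []
  · rw [Ls_of_L_eq_nil (L_add_eq_nil.2 hL), la_add]
    linarith [hm _ (la_mem_atomList hL.2),
      hG.la_le hL.1 (stops_add_mem_atomList G fun _ => mem_atomList_wait (n := N)).1]
  refine Ls_le (fun h => hL (L_add_eq_nil.1 h)) fun y hy => ?_
  obtain ⟨g, hg, rfl⟩ | ⟨x, hx, rfl⟩ := mem_L_add.1 hy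
  · linarith [Rs_add_le_Rs_add_wait_add (hG.of_mem_L hg) hm hN,
      Rs_le_Ls_of_mem_L (mem_L_add.2 (.inl ⟨g, hg, rfl⟩) : g.add _ ∈ (G.add (wait N)).L)]
  · have hxN := birthday_lt_of_mem_L hx
    obtain ⟨N, rfl⟩ : ∃ N', N = N' + 1 := Nat.exists_eq_succ_of_ne_zero (by omega)
    have hwait : G.add (wait N) ∈ (G.add (wait (N + 1))).L :=
      mem_L_add.2 (.inr ⟨_, by simp [L_wait_succ], rfl⟩)
    linarith [Rs_le_Ls_of_mem_L hwait, Rs_add_le_Rs_add_wait_add hG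
      (fun s hs => hm s (mem_atomList_of_mem_L hx hs)) (Nat.le_of_lt_succ (hxN.trans_le hN))]
termination_by sizeOf G + sizeOf X
decreasing_by
  all_goals first | have := sizeOf_lt_of_mem_L hx | have := sizeOf_lt_of_mem_L hg
  all_goals omega

end

theorem lsU_add_la_le_Ls_add {G X : SG} (hG : G.Guaranteed) (hX : X.Guaranteed)
    (hXL : X.L = []) : lsU G + X.la ≤ Ls (G.add X) := by
  linarith [lsU_le G X.birthday, Ls_add_conj_wait_add_le hG (fun _ => hX.la_le hXL) le_rfl]

theorem Rs_add_le_rsO_add_ra {G X : SG} (hG : G.Guaranteed) (hX : X.Guaranteed)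
    (hXR : X.R = []) : Rs (G.add X) ≤ rsO G + X.ra := by
  linarith [le_rsO G X.birthday, Rs_add_le_Rs_add_wait_add hG (fun _ => hX.le_ra hXR) le_rfl]
theorem stops_add_le_of_conditions {G H : SG} (hG : G.Guaranteed) (hH : H.Guaranteed)
    (h1l : H.lsU ≤ G.lsU) (h1r : H.rsO ≤ G.rsO)
    (h2 : ∀ Hl ∈ H.L, (∃ Gl ∈ G.L, Gl.Ge Hl) ∨ ∃ Hlr ∈ Hl.R, G.Ge Hlr)
    (h3 : ∀ Gr ∈ G.R, (∃ Hr ∈ H.R, Gr.Ge Hr) ∨ ∃ Grl ∈ Gr.L, Grl.Ge H)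
    {X : SG} (hX : X.Guaranteed) :
    Ls (H.add X) ≤ Ls (G.add X) ∧ Rs (H.add X) ≤ Rs (G.add X) := by
  constructor
  · by_cases hHX : (H.add X).L = []
    · obtain ⟨hHL, hXL⟩ := L_add_eq_nil.1 hHX
      rw [Ls_of_L_eq_nil hHX, la_add, ← lsU_of_L_eq_nil hHL]
      linarith [lsU_add_la_le_Ls_add hG hX hXL]
    refine Ls_le hHX fun y hy => ?_
    obtain ⟨Hl, hHl, rfl⟩ | ⟨x, hx, rfl⟩ := mem_L_add.1 hy
    · obtain ⟨Gl, hGl, hge⟩ | ⟨Hlr, hHlr, hge⟩ := h2 Hl hHl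
      · exact (hge X hX).2.trans (Rs_le_Ls_of_mem_L (mem_L_add.2 (.inl ⟨Gl, hGl, rfl⟩)))
      · exact (Rs_le_Ls_of_mem_R (mem_R_add.2 (.inl ⟨Hlr, hHlr, rfl⟩))).trans (hge X hX).1
    · exact (stops_add_le_of_conditions hG hH h1l h1r h2 h3 (hX.of_mem_L hx)).2.trans
        (Rs_le_Ls_of_mem_L (mem_L_add.2 (.inr ⟨x, hx, rfl⟩)))
  · by_cases hGX : (G.add X).R = []
    · obtain ⟨hGR, hXR⟩ := R_add_eq_nil.1 hGX
      rw [Rs_of_R_eq_nil hGX, ra_add, ← rsO_of_R_eq_nil hGR]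
      linarith [Rs_add_le_rsO_add_ra hH hX hXR]
    refine le_Rs hGX fun y hy => ?_
    obtain ⟨Gr, hGr, rfl⟩ | ⟨x, hx, rfl⟩ := mem_R_add.1 hy
    · obtain ⟨Hr, hHr, hge⟩ | ⟨Grl, hGrl, hge⟩ := h3 Gr hGr
      · exact (Rs_le_Ls_of_mem_R (mem_R_add.2 (.inl ⟨Hr, hHr, rfl⟩))).trans (hge X hX).1
      · exact (hge X hX).2.trans (Rs_le_Ls_of_mem_L (mem_L_add.2 (.inl ⟨Grl, hGrl, rfl⟩)))
    · exact (Rs_le_Ls_of_mem_R (mem_R_add.2 (.inr ⟨x, hx, rfl⟩))).trans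
        (stops_add_le_of_conditions hG hH h1l h1r h2 h3 (hX.of_mem_R hx)).1
termination_by sizeOf X
decreasing_by exacts [sizeOf_lt_of_mem_L hx, sizeOf_lt_of_mem_R hx]

def LsSeparated (A B : SG) : Prop :=
  ∃ T : SG, T.Guaranteed ∧ Ls (A.add T) < 0 ∧ 0 < Ls (B.add T)

def RsSeparated (A B : SG) : Prop :=
  ∃ T : SG, T.Guaranteed ∧ Rs (A.add T) < 0 ∧ 0 < Rs (B.add T)

theorem lsSeparated_of_Ls_lt {A B X : SG} (hX : X.Guaranteed)
    (h : Ls (A.add X) < Ls (B.add X)) : LsSeparated A B := by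
  obtain ⟨c, hA, hB⟩ := exists_between h
  refine ⟨X.add (num (-c)), hX.add (guaranteed_num _), ?_, ?_⟩ <;>
    rw [Ls_add_add_num] <;> linarith

theorem rsSeparated_of_Rs_lt {A B X : SG} (hX : X.Guaranteed)
    (h : Rs (A.add X) < Rs (B.add X)) : RsSeparated A B := by
  obtain ⟨c, hA, hB⟩ := exists_between h
  refine ⟨X.add (num (-c)), hX.add (guaranteed_num _), ?_, ?_⟩ <;>
    rw [Rs_add_add_num] <;> linarith

/-- In `A + {T | -M}`, a Left move `A^L + {T | -M}` is answered by `A^L - M`, which is negative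
for large `M`, so only the move to `A + T` counts. -/
theorem RsSeparated.lsSeparated {A B : SG} (h : RsSeparated A B) : LsSeparated A B := by
  obtain ⟨T, hT, hA, hB⟩ := h
  obtain ⟨M, hM⟩ := A.L.exists_forall_lt Ls
  let U := mk 0 0 [T] [num (-M)]
  refine ⟨U, guaranteed_mk_of_ne_nil (by simp) (by simp) (by simpa) (by simp [guaranteed_num]),
    ?_, hB.trans_le (Rs_le_Ls_of_mem_L (mem_L_add.2 (.inr ⟨T, by simp [U], rfl⟩)))⟩
  obtain ⟨y, hy, he⟩ := exists_Ls_eq_Rs (G := A.add U) (by simp [L_add, U])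
  rw [he]
  obtain ⟨g, hg, rfl⟩ | ⟨x, hx, rfl⟩ := mem_L_add.1 hy
  · have := Rs_le_Ls_of_mem_R (mem_R_add.2 (.inr ⟨num (-M), by simp [U], rfl⟩) :
      g.add (num (-M)) ∈ (g.add U).R)
    linarith [(stops_add_num g (-M)).1, hM g hg]
  · obtain rfl : x = T := by simpa [U] using hx
    exact hA

theorem LsSeparated.rsSeparated {A B : SG} (h : LsSeparated A B) : RsSeparated A B := by
  obtain ⟨T, hT, hA, hB⟩ := h
  obtain ⟨M, hM⟩ := B.R.exists_forall_lt (- Rs ·)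
  let V := mk 0 0 [num M] [T]
  refine ⟨V, guaranteed_mk_of_ne_nil (by simp) (by simp) (by simp [guaranteed_num]) (by simpa),
    (Rs_le_Ls_of_mem_R (mem_R_add.2 (.inr ⟨T, by simp [V], rfl⟩))).trans_lt hA, ?_⟩
  obtain ⟨y, hy, he⟩ := exists_Rs_eq_Ls (G := B.add V) (by simp [R_add, V])
  rw [he]
  obtain ⟨g, hg, rfl⟩ | ⟨x, hx, rfl⟩ := mem_R_add.1 hy
  · have := Rs_le_Ls_of_mem_L (mem_L_add.2 (.inr ⟨num M, by simp [V], rfl⟩) :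
      g.add (num M) ∈ (g.add V).L)
    linarith [(stops_add_num g M).2, hM g hg]
  · obtain rfl : x = T := by simpa [V] using hx
    exact hB

theorem lsSeparated_of_not_ge {A B : SG} (h : ¬ A.Ge B) : LsSeparated A B := by
  simp only [Ge, not_forall, not_and_or, not_le] at h
  obtain ⟨X, hX, hL | hR⟩ := h
  exacts [lsSeparated_of_Ls_lt hX hL, (rsSeparated_of_Rs_lt hX hR).lsSeparated]

theorem rsSeparated_of_not_ge {A B : SG} (h : ¬ A.Ge B) : RsSeparated A B := by
  simp only [Ge, not_forall, not_and_or, not_le] at h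
  obtain ⟨X, hX, hL | hR⟩ := h
  exacts [(lsSeparated_of_Ls_lt hX hL).rsSeparated, rsSeparated_of_Rs_lt hX hR]

instance : Nonempty SG := ⟨zero⟩

theorem linked_of_separated {A B : SG} (hL : ∀ Al ∈ A.L, LsSeparated Al B)
    (hR : ∀ Br ∈ B.R, RsSeparated A Br) : Linked A B := by
  choose! U hU hUA hUB using hL
  choose! V hV hVA hVB using hR
  let T := mk 0 0 (num (-(Rs A + 1)) :: B.R.map V) (num (1 - Ls B) :: A.L.map U)
  refine ⟨T, guaranteed_mk_of_ne_nil (by simp) (by simp) ?_ ?_, ?_, ?_⟩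
  · simpa [guaranteed_num] using hV
  · simpa [guaranteed_num] using hU
  · obtain ⟨y, hy, he⟩ := exists_Ls_eq_Rs (G := A.add T) (by simp [L_add, T])
    rw [he]
    obtain ⟨Al, hAl, rfl⟩ | ⟨x, hx, rfl⟩ := mem_L_add.1 hy
    · have hU : U Al ∈ T.R := List.mem_cons_of_mem _ (List.mem_map_of_mem hAl)
      exact (Rs_le_Ls_of_mem_R (mem_R_add.2 (.inr ⟨U Al, hU, rfl⟩))).trans_lt (hUA Al hAl)
    · simp only [T, L_mk, List.mem_cons, List.mem_map] at hx
      obtain rfl | ⟨Br, hBr, rfl⟩ := hx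
      · linarith [(stops_add_num A (-(Rs A + 1))).2]
      · exact hVA Br hBr
  · obtain ⟨y, hy, he⟩ := exists_Rs_eq_Ls (G := B.add T) (by simp [R_add, T])
    rw [he]
    obtain ⟨Br, hBr, rfl⟩ | ⟨x, hx, rfl⟩ := mem_R_add.1 hy
    · have hV : V Br ∈ T.L := List.mem_cons_of_mem _ (List.mem_map_of_mem hBr)
      exact (hVB Br hBr).trans_le (Rs_le_Ls_of_mem_L (mem_L_add.2 (.inr ⟨V Br, hV, rfl⟩)))
    · simp only [T, R_mk, List.mem_cons, List.mem_map] at hx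
      obtain rfl | ⟨Al, hAl, rfl⟩ := hx
      · linarith [(stops_add_num B (1 - Ls B)).1]
      · exact hUB Al hAl

theorem linked_of_forall_not_ge {A B : SG} (hL : ∀ Al ∈ A.L, ¬ Al.Ge B)
    (hR : ∀ Br ∈ B.R, ¬ A.Ge Br) : Linked A B :=
  linked_of_separated (fun Al hAl => lsSeparated_of_not_ge (hL Al hAl))
    fun Br hBr => rsSeparated_of_not_ge (hR Br hBr)

namespace Ge

theorem lsU_le_lsU {G H : SG} (h : G.Ge H) : H.lsU ≤ G.lsU :=
  le_ciInf fun n => (lsU_le H n).trans (h _ (guaranteed_conj_wait n)).1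

theorem rsO_le_rsO {G H : SG} (h : G.Ge H) : H.rsO ≤ G.rsO :=
  ciSup_le fun n => (h _ (guaranteed_wait n)).2.trans (le_rsO G n)

theorem exists_of_mem_L {G H Hl : SG} (h : G.Ge H) (hHl : Hl ∈ H.L) :
    (∃ Gl ∈ G.L, Gl.Ge Hl) ∨ ∃ Hlr ∈ Hl.R, G.Ge Hlr := by
  by_contra! hn
  obtain ⟨T, hT, hG, hHl'⟩ := linked_of_forall_not_ge hn.1 hn.2
  linarith [(h T hT).1, Rs_le_Ls_of_mem_L (mem_L_add.2 (.inl ⟨Hl, hHl, rfl⟩) : Hl.add T ∈ _)]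

theorem exists_of_mem_R {G H Gr : SG} (h : G.Ge H) (hGr : Gr ∈ G.R) :
    (∃ Hr ∈ H.R, Gr.Ge Hr) ∨ ∃ Grl ∈ Gr.L, Grl.Ge H := by
  by_contra! hn
  obtain ⟨T, hT, hGr', hH⟩ := linked_of_forall_not_ge hn.2 hn.1
  linarith [(h T hT).2, Rs_le_Ls_of_mem_R (mem_R_add.2 (.inl ⟨Gr, hGr, rfl⟩) : Gr.add T ∈ _)]

end Ge

/-- Constructive Comparison. -/
theorem constructive_comparison (G H : SG) (hG : G.Guaranteed)
    (hH : H.Guaranteed) :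
    G.Ge H ↔
      ((G.lsU ≥ H.lsU ∧ G.rsO ≥ H.rsO) ∧
       (∀ Hl ∈ H.L, (∃ Gl ∈ G.L, Gl.Ge Hl) ∨ (∃ Hlr ∈ Hl.R, G.Ge Hlr)) ∧
       (∀ Gr ∈ G.R, (∃ Hr ∈ H.R, Gr.Ge Hr) ∨ (∃ Grl ∈ Gr.L, Grl.Ge H))) := by
  refine ⟨fun h => ⟨⟨h.lsU_le_lsU, h.rsO_le_rsO⟩, fun _ => h.exists_of_mem_L,
    fun _ => h.exists_of_mem_R⟩, ?_⟩
  rintro ⟨⟨h1l, h1r⟩, h2, h3⟩ X hX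
  exact stops_add_le_of_conditions hG hH h1l h1r h2 h3 hX

end SG
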